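/- Let S ⊆ (Fin p → ℝ) be a finite nonempty set, C = convexHull ℝ S, and let 𝓑₀ be any nonempty collection of bases of M. Then the restricted quantity MMR̃ = min_{B ∈ 𝓑₀} (max_{s ∈ S} Regret(B, s)) is an upper bound on the true minimax regret: MMR(C) ≤ MMR̃. -/

import Mathlib

/-- The weight `w(λ, B) = ∑_{e ∈ B} ∑_j Y e j * λ j`. -/
noncomputable def matroidWeight {E : Type*} [Fintype E] {p : ℕ}
    (Y : E → Fin p → ℝ) (lam : Fin p → ℝ) (B : Set E) : ℝ :=
  ∑ e ∈ B.toFinite.toFinset, ∑ j, Y e j * lam j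

/-- `z*(λ)`: the minimum weight of a base of `M` at parameter `λ`. -/
noncomputable def zStar {E : Type*} [Fintype E] {p : ℕ}
    (M : Matroid E) (Y : E → Fin p → ℝ) (lam : Fin p → ℝ) : ℝ :=
  sInf {r : ℝ | ∃ B, M.IsBase B ∧ r = matroidWeight Y lam B}

/-- `Regret(B, λ) = w(λ, B) − z*(λ)`. -/
noncomputable def regret {E : Type*} [Fintype E] {p : ℕ}
    (M : Matroid E) (Y : E → Fin p → ℝ) (B : Set E) (lam : Fin p → ℝ) : ℝ :=
  matroidWeight Y lam B - zStar M Y lam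

/-- `MMR(C)`: the minimum over bases `B` of `M` of `sup_{λ ∈ C} Regret(B, λ)`. -/
noncomputable def MMR {E : Type*} [Fintype E] {p : ℕ}
    (M : Matroid E) (Y : E → Fin p → ℝ) (C : Set (Fin p → ℝ)) : ℝ :=
  sInf {r : ℝ | ∃ B, M.IsBase B ∧ r = sSup (regret M Y B '' C)}

lemma weight_combo {E : Type*} [Fintype E] {p : ℕ}
    (Y : E → Fin p → ℝ) (x y : Fin p → ℝ) (a b : ℝ) (B : Set E) :
    matroidWeight Y (a • x + b • y) B
      = a * matroidWeight Y x B + b * matroidWeight Y y B := by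
  simp only [matroidWeight, Finset.mul_sum]
  rw [← Finset.sum_add_distrib]
  refine Finset.sum_congr rfl fun e _ => ?_
  rw [← Finset.sum_add_distrib]
  refine Finset.sum_congr rfl fun j _ => ?_
  simp [Pi.add_apply, Pi.smul_apply, smul_eq_mul]
  ring

lemma zStar_set_finite {E : Type*} [Fintype E] {p : ℕ}
    (M : Matroid E) (Y : E → Fin p → ℝ) (lam : Fin p → ℝ) :
    {r : ℝ | ∃ B, M.IsBase B ∧ r = matroidWeight Y lam B}.Finite := by
  have : {r : ℝ | ∃ B, M.IsBase B ∧ r = matroidWeight Y lam B}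
      = (fun B => matroidWeight Y lam B) '' {B | M.IsBase B} := by
    ext r; simp [eq_comm]
  rw [this]
  exact (Set.toFinite _).image _

lemma zStar_le {E : Type*} [Fintype E] {p : ℕ}
    (M : Matroid E) (Y : E → Fin p → ℝ) (lam : Fin p → ℝ) {B : Set E} (hB : M.IsBase B) :
    zStar M Y lam ≤ matroidWeight Y lam B :=
  csInf_le (zStar_set_finite M Y lam).bddBelow ⟨B, hB, rfl⟩

lemma zStar_attained {E : Type*} [Fintype E] {p : ℕ}
    (M : Matroid E) (Y : E → Fin p → ℝ) (lam : Fin p → ℝ) :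
    ∃ B, M.IsBase B ∧ zStar M Y lam = matroidWeight Y lam B := by
  obtain ⟨B, hB⟩ := M.exists_isBase
  have : zStar M Y lam ∈ {r : ℝ | ∃ B, M.IsBase B ∧ r = matroidWeight Y lam B} :=
    Set.Nonempty.csInf_mem ⟨_, ⟨B, hB, rfl⟩⟩ (zStar_set_finite M Y lam)
  exact this
lemma zStar_concave {E : Type*} [Fintype E] {p : ℕ}
    (M : Matroid E) (Y : E → Fin p → ℝ) :
    ConcaveOn ℝ Set.univ (zStar M Y) := by
  refine ⟨convex_univ, fun x _ y _ a b ha hb hab => ?_⟩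
  obtain ⟨B, hB, hEq⟩ := zStar_attained M Y (a • x + b • y)
  rw [hEq, weight_combo]
  have h1 := zStar_le M Y x hB
  have h2 := zStar_le M Y y hB
  have := mul_le_mul_of_nonneg_left h1 ha
  have := mul_le_mul_of_nonneg_left h2 hb
  simp only [smul_eq_mul]
  linarith

lemma regret_convex {E : Type*} [Fintype E] {p : ℕ}
    (M : Matroid E) (Y : E → Fin p → ℝ) (B : Set E) :
    ConvexOn ℝ Set.univ (regret M Y B) := by
  have hw : ConvexOn ℝ Set.univ (fun lam => matroidWeight Y lam B) := by
    refine ⟨convex_univ, fun x _ y _ a b ha hb hab => ?_⟩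
    simp only [smul_eq_mul]
    rw [weight_combo]
  exact hw.sub (zStar_concave M Y)

/-- Let `S` be a finite nonempty set, `C = convexHull ℝ S`, and `𝓑₀` a
nonempty collection of bases of `M`.  Then the restricted quantity
`MMR̃ = min_{B ∈ 𝓑₀} (max_{s ∈ S} Regret(B, s))` is an upper bound on the true minimax
regret: `MMR(C) ≤ MMR̃`. -/
theorem mmr_le_restricted_mmr
    {E : Type*} [Fintype E] {p : ℕ} (hp : 0 < p)
    (M : Matroid E) (hME : M.E = Set.univ) (Y : E → Fin p → ℝ)
    (S : Set (Fin p → ℝ)) (hS : S.Finite) (hSne : S.Nonempty)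
    (C : Set (Fin p → ℝ)) (hC : C = convexHull ℝ S)
    (B₀ : Set (Set E)) (hB₀ne : B₀.Nonempty) (hB₀ : ∀ B ∈ B₀, M.IsBase B) :
    MMR M Y C ≤ sInf {r : ℝ | ∃ B ∈ B₀, r = sSup (regret M Y B '' S)} := by
  obtain ⟨B₁, hB₁⟩ := hB₀ne
  refine le_csInf ⟨_, B₁, hB₁, rfl⟩ ?_
  rintro r ⟨B, hBmem, rfl⟩
  have hBase := hB₀ B hBmem
  -- key pointwise bound: for x ∈ C, regret B x ≤ sSup (regret M Y B '' S)
  have key : ∀ x ∈ C, regret M Y B x ≤ sSup (regret M Y B '' S) := by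
    intro x hx
    rw [hC] at hx
    obtain ⟨y, hyS, hle⟩ :=
      (regret_convex M Y B).exists_ge_of_mem_convexHull (Set.subset_univ S) hx
    exact hle.trans (le_csSup ((hS.image _).bddAbove) ⟨y, hyS, rfl⟩)
  -- MMR set is finite hence bddBelow
  have hfin : {r : ℝ | ∃ B', M.IsBase B' ∧ r = sSup (regret M Y B' '' C)}.Finite := by
    have : {r : ℝ | ∃ B', M.IsBase B' ∧ r = sSup (regret M Y B' '' C)}
        = (fun B' => sSup (regret M Y B' '' C)) '' {B' | M.IsBase B'} := by
      ext r; simp [eq_comm]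
    rw [this]; exact (Set.toFinite _).image _
  have h1 : MMR M Y C ≤ sSup (regret M Y B '' C) :=
    csInf_le hfin.bddBelow ⟨B, hBase, rfl⟩
  refine h1.trans (csSup_le ?_ ?_)
  · exact (hSne.mono (hC ▸ subset_convexHull ℝ S)).image _
  · rintro v ⟨x, hx, rfl⟩
    exact key x hx
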